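/- Consider the non-autonomous tent maps f_n(x) = 2(1+2^{-n-1})x for x ≤ 1/2 and f_n(x) = 2(1+2^{-n-1})(1−x) for x > 1/2, acting on [0,1]. The set A of points x ∈ [0,1] whose orbit x, f_1(x), f_2(f_1(x)), … remains in [0,1] forever has Lebesgue measure at least 4/5 − 1/4 > 0. -/
import Mathlib


open MeasureTheory Set
open scoped ENNReal

/-- The `n`-th non-autonomous tent map `f_n`. -/
noncomputable def fatTent (n : ℕ) (x : ℝ) : ℝ :=
  if x ≤ 1/2 then 2 * (1 + (2:ℝ) ^ (-(n:ℤ) - 1)) * x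
  else 2 * (1 + (2:ℝ) ^ (-(n:ℤ) - 1)) * (1 - x)

/-- The orbit `x, f_1(x), f_2(f_1(x)), …` of `x` under the non-autonomous tent maps. -/
noncomputable def fatTentOrbit (x : ℝ) : ℕ → ℝ
  | 0 => x
  | n + 1 => fatTent (n + 1) (fatTentOrbit x n)

/-- The slope of the `k`-th tent map. -/
noncomputable def tentC (k : ℕ) : ℝ := 2 * (1 + (2:ℝ) ^ (-(k:ℤ) - 1))

lemma tentC_gt_two (k : ℕ) : 2 < tentC k := by
  have : (0:ℝ) < (2:ℝ) ^ (-(k:ℤ) - 1) := by positivity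
  unfold tentC; linarith

lemma tentC_pos (k : ℕ) : 0 < tentC k := lt_trans two_pos (tentC_gt_two k)

lemma fatTent_eq (k : ℕ) (x : ℝ) :
    fatTent k x = if x ≤ 1/2 then tentC k * x else tentC k * (1 - x) := rfl

/-- A single tent map does not increase measure under preimages. -/
lemma fatTent_preimage_le (k : ℕ) (B : Set ℝ) :
    volume (fatTent k ⁻¹' B) ≤ volume B := by
  set C := tentC k with hCdef
  have hC2 : 2 < C := tentC_gt_two k
  have hCpos : 0 < C := tentC_pos k
  have hC0 : C ≠ 0 := ne_of_gt hCpos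
  have hsub : fatTent k ⁻¹' B ⊆
      ((C * ·) ⁻¹' B) ∪ (((-C) * ·) ⁻¹' ((· + C) ⁻¹' B)) := by
    intro x hx
    simp only [mem_preimage, fatTent_eq, ← hCdef] at hx
    by_cases h : x ≤ 1/2
    · left; rw [if_pos h] at hx; exact hx
    · right; rw [if_neg h] at hx
      simp only [mem_preimage, mem_union]
      have : (-C) * x + C = C * (1 - x) := by ring
      rw [this]; exact hx
  have hhalf : ENNReal.ofReal |C⁻¹| ≤ 2⁻¹ := by
    rw [abs_of_pos (inv_pos.mpr hCpos)]
    have h1 : (C:ℝ)⁻¹ ≤ 2⁻¹ := by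
      apply inv_anti₀ two_pos (le_of_lt hC2)
    calc ENNReal.ofReal C⁻¹ ≤ ENNReal.ofReal 2⁻¹ := ENNReal.ofReal_le_ofReal h1
      _ = 2⁻¹ := by
          rw [ENNReal.ofReal_inv_of_pos two_pos]
          norm_num
  calc volume (fatTent k ⁻¹' B)
      ≤ volume (((C * ·) ⁻¹' B) ∪ (((-C) * ·) ⁻¹' ((· + C) ⁻¹' B))) := measure_mono hsub
    _ ≤ volume ((C * ·) ⁻¹' B) + volume (((-C) * ·) ⁻¹' ((· + C) ⁻¹' B)) :=
        measure_union_le _ _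
    _ = ENNReal.ofReal |C⁻¹| * volume B + ENNReal.ofReal |(-C)⁻¹| * volume B := by
        rw [Real.volume_preimage_mul_left hC0, Real.volume_preimage_mul_left
          (neg_ne_zero.mpr hC0), measure_preimage_add_right]
    _ ≤ 2⁻¹ * volume B + 2⁻¹ * volume B := by
        exact add_le_add (mul_le_mul_left hhalf _)
          (mul_le_mul_left (by rw [inv_neg, abs_neg]; exact hhalf) _)
    _ = volume B := by rw [← add_mul, ENNReal.inv_two_add_inv_two, one_mul]

lemma orbit_preimage_le (n : ℕ) :
    ∀ B : Set ℝ, volume ((fun x => fatTentOrbit x n) ⁻¹' B) ≤ volume B := by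
  induction n with
  | zero => intro B; simp [fatTentOrbit, Set.preimage_id']
  | succ n ih =>
      intro B
      have h : (fun x => fatTentOrbit x (n+1)) ⁻¹' B
          = (fun x => fatTentOrbit x n) ⁻¹' (fatTent (n+1) ⁻¹' B) := by
        ext x; simp [fatTentOrbit, Set.mem_preimage]
      rw [h]
      exact (ih _).trans (fatTent_preimage_le _ _)

/-- Points that escape in one step lie in the middle interval. -/
lemma escape_mem_Ioo (k : ℕ) {y : ℝ} (hy : y ∈ Icc (0:ℝ) 1)
    (hesc : fatTent k y ∉ Icc (0:ℝ) 1) :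
    y ∈ Ioo (tentC k)⁻¹ (1 - (tentC k)⁻¹) := by
  obtain ⟨hy0, hy1⟩ := hy
  set C := tentC k with hCdef
  have hC2 : 2 < C := tentC_gt_two k
  have hCpos : 0 < C := tentC_pos k
  have hCinv : C⁻¹ < 2⁻¹ := inv_strictAnti₀ two_pos hC2
  have hmul : C * C⁻¹ = 1 := mul_inv_cancel₀ (ne_of_gt hCpos)
  rw [fatTent_eq, ← hCdef] at hesc
  by_cases h : y ≤ 1/2
  · rw [if_pos h] at hesc
    have hnn : 0 ≤ C * y := mul_nonneg (le_of_lt hCpos) hy0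
    have h1 : 1 < C * y := by
      by_contra hcon
      exact hesc ⟨hnn, not_lt.mp hcon⟩
    have hlt : C⁻¹ < y := by
      have h2 : C * C⁻¹ < C * y := by rw [hmul]; exact h1
      exact lt_of_mul_lt_mul_left h2 (le_of_lt hCpos)
    constructor
    · exact hlt
    · have : (2:ℝ)⁻¹ = 1/2 := by norm_num
      linarith [hCinv]
  · rw [if_neg h] at hesc
    push_neg at h
    have hnn : 0 ≤ C * (1 - y) := mul_nonneg (le_of_lt hCpos) (by linarith)
    have h1 : 1 < C * (1 - y) := by
      by_contra hcon
      exact hesc ⟨hnn, not_lt.mp hcon⟩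
    have hlt : C⁻¹ < 1 - y := by
      have h2 : C * C⁻¹ < C * (1 - y) := by rw [hmul]; exact h1
      exact lt_of_mul_lt_mul_left h2 (le_of_lt hCpos)
    constructor
    · have : (2:ℝ)⁻¹ = 1/2 := by norm_num
      linarith [hCinv]
    · linarith

lemma ofReal_half_pow (m : ℕ) :
    ENNReal.ofReal ((2⁻¹:ℝ)^m) = (2⁻¹:ℝ≥0∞)^m := by
  rw [ENNReal.ofReal_pow (by norm_num)]
  congr 1
  rw [ENNReal.ofReal_inv_of_pos two_pos]
  norm_num

/-- Measure bound on the middle interval at step `n+2`. -/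
lemma middle_bound (n : ℕ) :
    volume (Ioo (tentC (n+2))⁻¹ (1 - (tentC (n+2))⁻¹)) ≤ (2⁻¹:ℝ≥0∞)^(n+3) := by
  rw [Real.volume_Ioo, ← ofReal_half_pow]
  apply ENNReal.ofReal_le_ofReal
  have ht : ((2:ℝ) ^ (-((n+2:ℕ):ℤ) - 1)) = (2⁻¹:ℝ)^(n+3) := by
    rw [show (-((n+2:ℕ):ℤ) - 1) = -((n+3:ℕ):ℤ) by push_cast; ring, zpow_neg,
      zpow_natCast, ← inv_pow]
  set t : ℝ := (2⁻¹:ℝ)^(n+3) with htdef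
  have htpos : 0 < t := by positivity
  have hC : tentC (n+2) = 2 * (1 + t) := by rw [tentC, ht]
  rw [hC]
  have h1t : (0:ℝ) < 2 * (1 + t) := by linarith
  have hu : (2 * (1 + t)) * (2 * (1 + t))⁻¹ = 1 := mul_inv_cancel₀ (ne_of_gt h1t)
  nlinarith [sq_nonneg t, inv_pos.mpr h1t]

lemma tsum_middle_bound :
    ∑' n : ℕ, volume (Ioo (tentC (n+1))⁻¹ (1 - (tentC (n+1))⁻¹))
      ≤ ENNReal.ofReal (9/20) := by
  have hsplit : ∑' n : ℕ, volume (Ioo (tentC (n+1))⁻¹ (1 - (tentC (n+1))⁻¹))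
      = volume (Ioo (tentC (0+1))⁻¹ (1 - (tentC (0+1))⁻¹))
        + ∑' n : ℕ, volume (Ioo (tentC (n+1+1))⁻¹ (1 - (tentC (n+1+1))⁻¹)) :=
    tsum_eq_zero_add' ENNReal.summable
  rw [hsplit]
  have h0 : volume (Ioo (tentC (0+1))⁻¹ (1 - (tentC (0+1))⁻¹))
      = ENNReal.ofReal (1/5) := by
    have hC1 : tentC (0+1) = 5/2 := by norm_num [tentC]
    rw [Real.volume_Ioo, hC1]
    norm_num
  have htail : ∑' n : ℕ, volume (Ioo (tentC (n+1+1))⁻¹ (1 - (tentC (n+1+1))⁻¹))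
      ≤ ENNReal.ofReal (1/4) := by
    calc ∑' n : ℕ, volume (Ioo (tentC (n+1+1))⁻¹ (1 - (tentC (n+1+1))⁻¹))
        ≤ ∑' n : ℕ, (2⁻¹:ℝ≥0∞)^(n+3) := ENNReal.tsum_le_tsum (fun n => middle_bound n)
      _ = ENNReal.ofReal (1/4) := by
          have hp : ∀ n : ℕ, (2⁻¹:ℝ≥0∞)^(n+3) = (2⁻¹:ℝ≥0∞)^n * (2⁻¹:ℝ≥0∞)^3 :=
            fun n => pow_add _ n 3
          rw [tsum_congr hp]
          rw [ENNReal.tsum_mul_right, ENNReal.tsum_geometric]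
          have h2 : (1 - (2⁻¹:ℝ≥0∞))⁻¹ = 2 := by
            rw [ENNReal.one_sub_inv_two, inv_inv]
          rw [h2]
          rw [show (ENNReal.ofReal (1/4)) = 4⁻¹ by
            rw [one_div, ENNReal.ofReal_inv_of_pos (by norm_num)]; norm_num]
          rw [show ((2⁻¹:ℝ≥0∞)^3) = 8⁻¹ by
            rw [← ENNReal.inv_pow]; norm_num]
          rw [show (8:ℝ≥0∞) = 4 * 2 by norm_num,
            ENNReal.mul_inv (by norm_num) (by norm_num)]
          rw [mul_comm (2:ℝ≥0∞), mul_assoc, ENNReal.inv_mul_cancel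
            (by norm_num) (by norm_num), mul_one]
  calc volume (Ioo (tentC (0+1))⁻¹ (1 - (tentC (0+1))⁻¹))
        + ∑' n : ℕ, volume (Ioo (tentC (n+1+1))⁻¹ (1 - (tentC (n+1+1))⁻¹))
      ≤ ENNReal.ofReal (1/5) + ENNReal.ofReal (1/4) := add_le_add (le_of_eq h0) htail
    _ = ENNReal.ofReal (9/20) := by
        rw [← ENNReal.ofReal_add (by norm_num) (by norm_num)]; norm_num

set_option maxHeartbeats 1000000 in
/-- The set of points of `[0,1]` whose orbit under the non-autonomous tent maps remains
in `[0,1]` forever has Lebesgue measure at least `4/5 − 1/4 > 0`. -/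
theorem fat_cantor_set_positive_measure :
    ENNReal.ofReal (4/5 - 1/4) ≤
      volume {x : ℝ | ∀ n : ℕ, fatTentOrbit x n ∈ Icc (0:ℝ) 1} ∧
    0 < volume {x : ℝ | ∀ n : ℕ, fatTentOrbit x n ∈ Icc (0:ℝ) 1} := by
  set A := {x : ℝ | ∀ n : ℕ, fatTentOrbit x n ∈ Icc (0:ℝ) 1} with hA
  set Bad := ⋃ n : ℕ, (fun x => fatTentOrbit x n) ⁻¹'
      (Ioo (tentC (n+1))⁻¹ (1 - (tentC (n+1))⁻¹)) with hBad
  -- covering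
  have hcover : Icc (0:ℝ) 1 ⊆ A ∪ Bad := by
    intro x hx
    by_cases hxa : x ∈ A
    · exact Or.inl hxa
    · right
      have hex : ∃ n, fatTentOrbit x n ∉ Icc (0:ℝ) 1 := by
        by_contra hc; push_neg at hc; exact hxa hc
      classical
      have hne0 : Nat.find hex ≠ 0 := by
        intro h0
        have := Nat.find_spec hex
        rw [h0] at this
        exact this hx
      obtain ⟨m, hm⟩ : ∃ m, Nat.find hex = m + 1 := Nat.exists_eq_succ_of_ne_zero hne0
      have hprev : fatTentOrbit x m ∈ Icc (0:ℝ) 1 := by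
        by_contra hc
        exact Nat.find_min hex (by omega) hc
      have hesc : fatTentOrbit x (m+1) ∉ Icc (0:ℝ) 1 := by
        rw [← hm]; exact Nat.find_spec hex
      have : fatTentOrbit x m ∈ Ioo (tentC (m+1))⁻¹ (1 - (tentC (m+1))⁻¹) :=
        escape_mem_Ioo (m+1) hprev hesc
      exact mem_iUnion.mpr ⟨m, this⟩
  -- measure of the bad set
  have hbad : volume Bad ≤ ENNReal.ofReal (9/20) := by
    calc volume Bad
        ≤ ∑' n : ℕ, volume ((fun x => fatTentOrbit x n) ⁻¹'
            (Ioo (tentC (n+1))⁻¹ (1 - (tentC (n+1))⁻¹))) := measure_iUnion_le _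
      _ ≤ ∑' n : ℕ, volume (Ioo (tentC (n+1))⁻¹ (1 - (tentC (n+1))⁻¹)) :=
          ENNReal.tsum_le_tsum (fun n => orbit_preimage_le n _)
      _ ≤ ENNReal.ofReal (9/20) := tsum_middle_bound
  have h1 : (1:ℝ≥0∞) ≤ volume A + ENNReal.ofReal (9/20) := by
    calc (1:ℝ≥0∞) = volume (Icc (0:ℝ) 1) := by
          rw [Real.volume_Icc]; norm_num
      _ ≤ volume (A ∪ Bad) := measure_mono hcover
      _ ≤ volume A + volume Bad := measure_union_le _ _
      _ ≤ volume A + ENNReal.ofReal (9/20) := by gcongr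
  have hmain : ENNReal.ofReal (4/5 - 1/4) ≤ volume A := by
    have heq : ENNReal.ofReal (4/5 - 1/4) = 1 - ENNReal.ofReal (9/20) := by
      rw [← ENNReal.ofReal_one, ← ENNReal.ofReal_sub _ (by norm_num)]
      norm_num
    rw [heq]
    exact tsub_le_iff_right.mpr h1
  refine ⟨hmain, lt_of_lt_of_le ?_ hmain⟩
  rw [ENNReal.ofReal_pos]
  norm_num
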